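/- Let Q be a quiver, k a vertex, and S_k the simple at k. Let mod(Q)_k = {M : Hom(S_k, M) = 0} and mod(Q)^k = {M : Hom(M, S_k) = 0}, and let ⟨S_k⟩ be the subcategory of modules all of whose composition factors are S_k (i.e. direct sums of S_k when k has no loops). Then (⟨S_k⟩, mod(Q)^k) and (mod(Q)_k, ⟨S_k⟩) are torsion pairs in mod kQ, and hence in the completed Hall algebra: χ(mod(Q)_k)·χ(⟨S_k⟩) = χ = χ(⟨S_k⟩)·χ(mod(Q)^k). -/

import Mathlib

/-!
Write `t W` for the torsion part of `W`. For the first pair it is the trace of `S_k` in `W`, the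
sum of the images of all maps `S_k → W`; at `k` this is the space of vectors killed by every arrow
out of `k`, and it vanishes elsewhere. For the second pair it is the reject of `S_k` in `W`, the
intersection of the kernels of all maps `W → S_k`; at `k` this is the span of the images of the
arrows into `k`, and it is everything elsewhere. Because `k` carries no loop, in an exact sequence
`0 → L → W → N → 0` the conditions `L ∈ T` and `N ∈ F` together are equivalent to `L = t W`, which
gives existence and uniqueness of the torsion sequences. In the Hall product `χ(F) · χ(T)`
evaluated at `W`, only the sequences with `L = t W` are counted. Such a sequence amounts to a
choice of bases of `t W` and `W / t W` at every vertex, so there are `|GL_δ| · |GL_{d - δ}|` of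
them, which cancels the normalisation in the product.
-/

namespace QP

structure FQuiver where
  V : Type
  E : Type
  [fV : Fintype V]
  [fE : Fintype E]
  [dV : DecidableEq V]
  [dE : DecidableEq E]
  src : E → V
  tgt : E → V

attribute [instance] FQuiver.fV FQuiver.fE FQuiver.dV FQuiver.dE

variable (Q : FQuiver) (K : Type) [Field K] [Fintype K]

/-- A finite-dimensional representation of the quiver `Q` over `K`. -/
structure Rep where
  d : Q.V → ℕ
  m : ∀ e : Q.E, (Fin (d (Q.src e)) → K) →ₗ[K] (Fin (d (Q.tgt e)) → K)

variable {Q K}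

/-- Morphisms of representations. -/
structure Hom (M N : Rep Q K) where
  f : ∀ v, (Fin (M.d v) → K) →ₗ[K] (Fin (N.d v) → K)
  comm : ∀ e, (f (Q.tgt e)).comp (M.m e) = (N.m e).comp (f (Q.src e))

def Hom.IsIso {M N : Rep Q K} (φ : Hom M N) : Prop := ∀ v, Function.Bijective (φ.f v)

/-- Isomorphism of representations. -/
def repIso (M N : Rep Q K) : Prop := ∃ φ : Hom M N, φ.IsIso

/-- The number of automorphisms `a_M = |Aut(M)|`. -/
noncomputable def aut (M : Rep Q K) : ℕ := Nat.card {φ : Hom M M // φ.IsIso}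

/-- `ι, π` form a short exact sequence `0 → V' → W → U → 0`. -/
def IsExactPair {V' W U : Rep Q K} (ι : Hom V' W) (π : Hom W U) : Prop :=
  ∀ v, Function.Injective (ι.f v) ∧ Function.Surjective (π.f v) ∧
    LinearMap.range (ι.f v) = LinearMap.ker (π.f v)

/-- Number of exact pairs `0 → V' → W → U → 0`; equals `F^W_{U V'} · a_U · a_{V'}`. -/
noncomputable def epairs (U V' W : Rep Q K) : ℕ :=
  Nat.card {p : Hom V' W × Hom W U // IsExactPair p.1 p.2}

variable (Q K) in
/-- Representations with a fixed dimension vector. -/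
def RepOf (d : Q.V → ℕ) := ∀ e : Q.E, (Fin (d (Q.src e)) → K) →ₗ[K] (Fin (d (Q.tgt e)) → K)

def RepOf.toRep {d : Q.V → ℕ} (m : RepOf Q K d) : Rep Q K := ⟨d, m⟩

variable (Q K) in
/-- `|GL_d| = ∏_v |GL_{d v}(K)|`. -/
noncomputable def glcard (d : Q.V → ℕ) : ℕ :=
  ∏ v : Q.V, Nat.card ((Fin (d v) → K) ≃ₗ[K] (Fin (d v) → K))

/-- A Hall-algebra element constant on isomorphism classes. -/
def IsoInvariant (h : Rep Q K → ℚ) : Prop := ∀ M N, repIso M N → h M = h N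

/-- The Hall product.  For iso-invariant `h₁ h₂` this computes
`([U][V] = ∑_W F^W_{UV}[W])`-multiplication, coefficientwise:
`(h₁ * h₂)(W) = ∑_{[U],[V]} h₁(U) h₂(V) F^W_{UV}`, using that the number of exact
pairs is `F^W_{UV} a_U a_V` and that each iso class of dimension `δ` has
`glcard δ / a` objects. -/
noncomputable def hmul (h₁ h₂ : Rep Q K → ℚ) : Rep Q K → ℚ := fun W =>
  ∑ᶠ (δ : Q.V → ℕ) (_ : ∀ v, δ v ≤ W.d v) (mV : RepOf Q K δ)
      (mU : RepOf Q K fun v => W.d v - δ v),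
    h₁ mU.toRep * h₂ mV.toRep * (epairs mU.toRep mV.toRep W : ℚ) /
      ((glcard Q K δ : ℚ) * (glcard Q K fun v => W.d v - δ v))

/-- The unit `[0]` of the Hall algebra. -/
noncomputable def hone : Rep Q K → ℚ := fun W => if W.d = fun _ => 0 then 1 else 0

open Classical in
/-- `χ(𝒞) = ∑_{M ∈ 𝒞} [M]` for a (iso-closed) subcategory cut out by `P`. -/
noncomputable def chi (P : Rep Q K → Prop) : Rep Q K → ℚ := fun M => if P M then 1 else 0

end QP

namespace QP

variable {Q : FQuiver} {K : Type} [Field K] [Fintype K]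

variable (Q K) in
/-- The simple representation `S_k` at the vertex `k`. -/
def simpleAt (k : Q.V) : Rep Q K :=
  ⟨fun v => if v = k then 1 else 0, fun _ => 0⟩

/-- `(T, F)` is a torsion pair: both classes are closed under isomorphism,
`Hom(T, F) = 0`, and every module has a (unique) short exact sequence
`0 → tM → M → M/tM → 0` with `tM ∈ T` and `M/tM ∈ F`. -/
def IsTorsionPair (T F : Rep Q K → Prop) : Prop :=
  (∀ M N, repIso M N → (T M ↔ T N)) ∧
  (∀ M N, repIso M N → (F M ↔ F N)) ∧
  (∀ (M N : Rep Q K) (φ : Hom M N), T M → F N → ∀ v, φ.f v = 0) ∧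
  (∀ W : Rep Q K, ∃ (L N : Rep Q K) (ι : Hom L W) (π : Hom W N),
    T L ∧ F N ∧ IsExactPair ι π) ∧
  (∀ (W L₁ N₁ L₂ N₂ : Rep Q K) (ι₁ : Hom L₁ W) (π₁ : Hom W N₁)
      (ι₂ : Hom L₂ W) (π₂ : Hom W N₂),
    T L₁ → F N₁ → IsExactPair ι₁ π₁ → T L₂ → F N₂ → IsExactPair ι₂ π₂ →
    repIso L₁ L₂ ∧ repIso N₁ N₂)

end QP

namespace QP

open Module LinearMap Function

variable {Q : FQuiver} {K : Type} [Field K]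

theorem Hom.ext {M N : Rep Q K} {φ ψ : Hom M N} (h : ∀ v, φ.f v = ψ.f v) : φ = ψ := by
  cases φ; cases ψ; congr; exact funext h

theorem Hom.comm_apply {M N : Rep Q K} (φ : Hom M N) (e : Q.E) (x : Fin (M.d (Q.src e)) → K) :
    φ.f (Q.tgt e) (M.m e x) = N.m e (φ.f (Q.src e) x) :=
  LinearMap.congr_fun (φ.comm e) x

def Hom.comp {A B C : Rep Q K} (g : Hom B C) (f : Hom A B) : Hom A C where
  f v := g.f v ∘ₗ f.f v
  comm e := by
    rw [LinearMap.comp_assoc, f.comm, ← LinearMap.comp_assoc, g.comm, LinearMap.comp_assoc]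

@[simp]
theorem Hom.comp_f {A B C : Rep Q K} (g : Hom B C) (f : Hom A B) (v : Q.V) :
    (g.comp f).f v = g.f v ∘ₗ f.f v :=
  rfl

noncomputable def Hom.inv {M N : Rep Q K} (φ : Hom M N) (h : φ.IsIso) : Hom N M where
  f v := (LinearEquiv.ofBijective (φ.f v) (h v)).symm
  comm e := LinearMap.ext fun y => (h (Q.tgt e)).1 <| by simp [φ.comm_apply]

theorem Hom.isIso_inv {M N : Rep Q K} (φ : Hom M N) (h : φ.IsIso) : (φ.inv h).IsIso :=
  fun v => (LinearEquiv.ofBijective (φ.f v) (h v)).symm.bijective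

theorem repIso.d_eq {M N : Rep Q K} (h : repIso M N) (v : Q.V) : M.d v = N.d v := by
  obtain ⟨φ, hφ⟩ := h
  simpa using (LinearEquiv.ofBijective (φ.f v) (hφ v)).finrank_eq

def HomVanishes (X M : Rep Q K) : Prop := ∀ φ : Hom X M, ∀ v, φ.f v = 0

theorem HomVanishes.of_injective {X M N : Rep Q K} (h : HomVanishes X M) (g : Hom N M)
    (hg : ∀ v, Injective (g.f v)) : HomVanishes X N := fun φ v =>
  LinearMap.ext fun x => hg v <| by simpa using LinearMap.congr_fun (h (g.comp φ) v) x

theorem HomVanishes.of_surjective {X M N : Rep Q K} (h : HomVanishes M X) (g : Hom M N)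
    (hg : ∀ v, Surjective (g.f v)) : HomVanishes N X := fun φ v =>
  LinearMap.ext fun y => by
    obtain ⟨x, rfl⟩ := hg v y
    simpa using LinearMap.congr_fun (h (φ.comp g) v) x

theorem repIso.homVanishes_right_iff {X M N : Rep Q K} (h : repIso M N) :
    HomVanishes X M ↔ HomVanishes X N := by
  obtain ⟨φ, hφ⟩ := h
  exact ⟨fun hM => hM.of_injective (φ.inv hφ) fun v => (φ.isIso_inv hφ v).1,
    fun hN => hN.of_injective φ fun v => (hφ v).1⟩

theorem repIso.homVanishes_left_iff {X M N : Rep Q K} (h : repIso M N) :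
    HomVanishes M X ↔ HomVanishes N X := by
  obtain ⟨φ, hφ⟩ := h
  exact ⟨fun hM => hM.of_surjective φ fun v => (hφ v).2,
    fun hN => hN.of_surjective (φ.inv hφ) fun v => (φ.isIso_inv hφ v).2⟩

theorem subsingleton_fin_fun {α : Type*} {n : ℕ} (h : n = 0) : Subsingleton (Fin n → α) := by
  subst h; infer_instance

def IsSubrep (W : Rep Q K) (S : ∀ v, Submodule K (Fin (W.d v) → K)) : Prop :=
  ∀ e, ∀ x ∈ S (Q.src e), W.m e x ∈ S (Q.tgt e)

def trace (X W : Rep Q K) (v : Q.V) : Submodule K (Fin (W.d v) → K) :=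
  ⨆ φ : Hom X W, range (φ.f v)

def reject (W X : Rep Q K) (v : Q.V) : Submodule K (Fin (W.d v) → K) :=
  ⨅ φ : Hom W X, ker (φ.f v)

section Trace

variable (X : Rep Q K) {W W' : Rep Q K}

theorem trace_isSubrep (W : Rep Q K) : IsSubrep W (trace X W) := by
  intro e x hx
  have : trace X W (Q.src e) ≤ (trace X W (Q.tgt e)).comap (W.m e) := iSup_le fun φ => by
    rintro _ ⟨y, rfl⟩
    rw [Submodule.mem_comap, ← φ.comm_apply]
    exact Submodule.mem_iSup_of_mem φ (mem_range_self _ _)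
  exact this hx

theorem map_trace_le (g : Hom W W') (v : Q.V) : (trace X W v).map (g.f v) ≤ trace X W' v := by
  rw [trace, Submodule.map_iSup]
  exact iSup_le fun φ => by
    rw [← range_comp]
    exact le_iSup (fun ψ : Hom X W' => range (ψ.f v)) (g.comp φ)

theorem trace_eq_bot_iff : (∀ v, trace X W v = ⊥) ↔ HomVanishes X W := by
  simp only [trace, iSup_eq_bot, range_eq_bot, HomVanishes]
  exact forall_comm

theorem trace_eq_bot_of_d_eq_zero (W : Rep Q K) {v : Q.V} (h : X.d v = 0) : trace X W v = ⊥ :=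
  have := subsingleton_fin_fun (α := K) h
  iSup_eq_bot.2 fun φ => range_eq_bot.2 (LinearMap.ext fun x => by simp [Subsingleton.elim x 0])

theorem HomVanishes.of_trace_eq_top {X M N : Rep Q K} (hM : ∀ v, trace X M v = ⊤)
    (hN : HomVanishes X N) : HomVanishes M N := fun φ v => by
  have := map_trace_le X φ v
  rwa [hM v, Submodule.map_top, (trace_eq_bot_iff X).2 hN v, le_bot_iff, range_eq_bot] at this

end Trace

section Reject

variable {W W' : Rep Q K} (X : Rep Q K)

theorem reject_isSubrep (W : Rep Q K) : IsSubrep W (reject W X) := by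
  intro e x hx
  refine Submodule.mem_iInf _ |>.2 fun φ => ?_
  rw [mem_ker, φ.comm_apply, mem_ker.1 ((Submodule.mem_iInf _).1 hx φ), map_zero]

theorem map_reject_le (g : Hom W W') (v : Q.V) : (reject W X v).map (g.f v) ≤ reject W' X v := by
  rintro _ ⟨x, hx, rfl⟩
  refine Submodule.mem_iInf _ |>.2 fun ψ => ?_
  exact (Submodule.mem_iInf _).1 hx (ψ.comp g)

theorem reject_eq_top_iff : (∀ v, reject W X v = ⊤) ↔ HomVanishes W X := by
  simp only [reject, iInf_eq_top, ker_eq_top, HomVanishes]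
  exact forall_comm

theorem reject_eq_top_of_d_eq_zero (W : Rep Q K) {v : Q.V} (h : X.d v = 0) : reject W X v = ⊤ :=
  have := subsingleton_fin_fun (α := K) h
  iInf_eq_top.2 fun _ => ker_eq_top.2 (LinearMap.ext fun _ => Subsingleton.elim _ _)

theorem HomVanishes.of_reject_eq_bot {X M N : Rep Q K} (hN : ∀ v, reject N X v = ⊥)
    (hM : HomVanishes M X) : HomVanishes M N := fun φ v => by
  have := map_reject_le X φ v
  rwa [(reject_eq_top_iff X).2 hM v, Submodule.map_top, hN v, le_bot_iff, range_eq_bot] at this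

end Reject

section LinearAlgebra

variable {R : Type*} [Ring R] {A B C V : Type*} [AddCommGroup A] [Module R A] [AddCommGroup B]
  [Module R B] [AddCommGroup C] [Module R C] [AddCommGroup V] [Module R V]

noncomputable def injectiveRangeEquiv (S : Submodule R V) :
    {j : A →ₗ[R] V // Injective j ∧ range j = S} ≃ (A ≃ₗ[R] S) where
  toFun j := (LinearEquiv.ofInjective j.1 j.2.1).trans (LinearEquiv.ofEq _ _ j.2.2)
  invFun g := ⟨S.subtype ∘ₗ g, S.injective_subtype.comp g.injective, by
    rw [range_comp, LinearEquiv.range, Submodule.map_top, Submodule.range_subtype]⟩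
  left_inv j := by ext; simp
  right_inv g := by ext; simp

@[simp]
theorem coe_injectiveRangeEquiv_apply (S : Submodule R V)
    (j : {j : A →ₗ[R] V // Injective j ∧ range j = S}) (x : A) :
    (injectiveRangeEquiv S j x : V) = j.1 x :=
  rfl

noncomputable def surjectiveKerEquiv (S : Submodule R V) :
    {g : V →ₗ[R] B // Surjective g ∧ ker g = S} ≃ ((V ⧸ S) ≃ₗ[R] B) where
  toFun g := (Submodule.quotEquivOfEq S _ g.2.2.symm).trans (g.1.quotKerEquivOfSurjective g.2.1)
  invFun q := ⟨q ∘ₗ S.mkQ, q.surjective.comp S.mkQ_surjective, by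
    rw [ker_comp, LinearEquiv.ker, Submodule.comap_bot, Submodule.ker_mkQ]⟩
  left_inv g := by ext; simp
  right_inv q := by ext x; obtain ⟨y, rfl⟩ := S.mkQ_surjective x; simp

@[simp]
theorem surjectiveKerEquiv_apply_mk (S : Submodule R V)
    (g : {g : V →ₗ[R] B // Surjective g ∧ ker g = S}) (x : V) :
    surjectiveKerEquiv S g (Submodule.Quotient.mk x) = g.1 x :=
  rfl

def linearEquivCongrRight (u : B ≃ₗ[R] C) : (A ≃ₗ[R] B) ≃ (A ≃ₗ[R] C) where
  toFun g := g.trans u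
  invFun g := g.trans u.symm
  left_inv g := by ext; simp
  right_inv g := by ext; simp

def linearEquivCongrLeft (u : A ≃ₗ[R] C) : (A ≃ₗ[R] B) ≃ (C ≃ₗ[R] B) where
  toFun g := u.symm.trans g
  invFun g := u.trans g
  left_inv g := by ext; simp
  right_inv g := by ext; simp

end LinearAlgebra

section Counting

variable {V : Type*} [AddCommGroup V] [Module K V] [FiniteDimensional K V]

theorem card_injective_range_eq {a : ℕ} (S : Submodule K V) (h : finrank K S = a) :
    Nat.card {j : (Fin a → K) →ₗ[K] V // Injective j ∧ range j = S} =
      Nat.card ((Fin a → K) ≃ₗ[K] (Fin a → K)) :=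
  Nat.card_congr <| (injectiveRangeEquiv S).trans <|
    linearEquivCongrRight (LinearEquiv.ofFinrankEq _ _ (by simp [h]))

theorem card_surjective_ker_eq {b : ℕ} (S : Submodule K V) (h : finrank K (V ⧸ S) = b) :
    Nat.card {g : V →ₗ[K] (Fin b → K) // Surjective g ∧ ker g = S} =
      Nat.card ((Fin b → K) ≃ₗ[K] (Fin b → K)) :=
  Nat.card_congr <| (surjectiveKerEquiv S).trans <|
    linearEquivCongrLeft (LinearEquiv.ofFinrankEq _ _ (by simp [h]))

end Counting

section Subrep

variable {W : Rep Q K} (S : ∀ v, Submodule K (Fin (W.d v) → K))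

noncomputable def dimVec : Q.V → ℕ := fun v => finrank K (S v)

theorem dimVec_le (v : Q.V) : dimVec S v ≤ W.d v :=
  (Submodule.finrank_le (S v)).trans_eq (finrank_fin_fun K)

theorem finrank_quotient_eq (v : Q.V) :
    finrank K ((Fin (W.d v) → K) ⧸ S v) = W.d v - dimVec S v := by
  have := Submodule.finrank_quotient_add_finrank (S v)
  rw [finrank_fin_fun] at this
  simp only [dimVec]; omega

abbrev EmbeddingsOnto := Σ mV : RepOf Q K (dimVec S),
  {ι : Hom mV.toRep W // ∀ v, Injective (ι.f v) ∧ range (ι.f v) = S v}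

abbrev QuotientsBy := Σ mU : RepOf Q K (fun v => W.d v - dimVec S v),
  {π : Hom W mU.toRep // ∀ v, Surjective (π.f v) ∧ ker (π.f v) = S v}

abbrev ExactPairsOnto :=
  Σ (mV : RepOf Q K (dimVec S)) (mU : RepOf Q K fun v => W.d v - dimVec S v),
  {p : Hom mV.toRep W × Hom W mU.toRep // IsExactPair p.1 p.2 ∧ ∀ v, range (p.1.f v) = S v}

variable {S}

theorem bijective_restrict_embeddingsOnto (hS : IsSubrep W S) :
    Bijective fun (x : EmbeddingsOnto S) v =>
      (⟨x.2.1.f v, x.2.2 v⟩ : {j : (Fin (dimVec S v) → K) →ₗ[K] (Fin (W.d v) → K) //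
        Injective j ∧ range j = S v}) := by
  constructor
  · rintro ⟨m, ι, hι⟩ ⟨m', ι', hι'⟩ h
    have hf : ∀ v, ι.f v = ι'.f v := fun v => congrArg Subtype.val (congrFun h v)
    obtain rfl : m = m' := funext fun e => LinearMap.ext fun y => (hι' (Q.tgt e)).1 <| by
      have h₁ := ι.comm_apply e y
      have h₂ := ι'.comm_apply e y
      rw [hf, hf] at h₁
      exact h₁.trans h₂.symm
    obtain rfl : ι = ι' := Hom.ext hf
    rfl
  · intro J
    choose g hg using fun v =>
      exists_leftInverse_of_injective (J v).1 (ker_eq_bot.2 (J v).2.1)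
    have hJg : ∀ v, ∀ y ∈ S v, (J v).1 (g v y) = y := by
      intro v y hy
      rw [← (J v).2.2] at hy
      obtain ⟨z, rfl⟩ := hy
      rw [← LinearMap.comp_apply (g v), hg, id_apply]
    refine ⟨⟨fun e => g (Q.tgt e) ∘ₗ W.m e ∘ₗ (J (Q.src e)).1,
      ⟨fun v => (J v).1, fun e => LinearMap.ext fun y => ?_⟩, fun v => (J v).2⟩, rfl⟩
    exact hJg _ _ (hS e _ ((J _).2.2.le (mem_range_self _ y)))

theorem bijective_restrict_quotientsBy (hS : IsSubrep W S) :
    Bijective fun (x : QuotientsBy S) v =>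
      (⟨x.2.1.f v, x.2.2 v⟩ :
        {g : (Fin (W.d v) → K) →ₗ[K] (Fin (W.d v - dimVec S v) → K) //
          Surjective g ∧ ker g = S v}) := by
  constructor
  · rintro ⟨m, π, hπ⟩ ⟨m', π', hπ'⟩ h
    have hf : ∀ v, π.f v = π'.f v := fun v => congrArg Subtype.val (congrFun h v)
    obtain rfl : m = m' := funext fun e => LinearMap.ext fun z => by
      obtain ⟨y, rfl⟩ := (hπ (Q.src e)).1 z
      have h₁ := π.comm_apply e y
      have h₂ := π'.comm_apply e y
      rw [hf, hf] at h₁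
      rw [hf]
      exact h₁.symm.trans h₂
    obtain rfl : π = π' := Hom.ext hf
    rfl
  · intro J
    choose s hs using fun v =>
      exists_rightInverse_of_surjective (J v).1 (range_eq_top.2 (J v).2.1)
    refine ⟨⟨fun e => (J (Q.tgt e)).1 ∘ₗ W.m e ∘ₗ s (Q.src e),
      ⟨fun v => (J v).1, fun e => LinearMap.ext fun x => ?_⟩, fun v => (J v).2⟩, rfl⟩
    have hx : s (Q.src e) ((J (Q.src e)).1 x) - x ∈ S (Q.src e) := (J _).2.2.le <| by
      rw [mem_ker, map_sub, ← LinearMap.comp_apply ((J _).1), hs, id_apply, sub_self]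
    have := mem_ker.1 ((J _).2.2.ge (hS e _ hx))
    rw [map_sub, map_sub, sub_eq_zero] at this
    exact this.symm

def exactPairsEquiv : ExactPairsOnto S ≃ EmbeddingsOnto S × QuotientsBy S where
  toFun x := (⟨x.1, x.2.2.1.1, fun v => ⟨(x.2.2.2.1 v).1, x.2.2.2.2 v⟩⟩,
    ⟨x.2.1, x.2.2.1.2, fun v =>
      ⟨(x.2.2.2.1 v).2.1, by rw [← (x.2.2.2.1 v).2.2, x.2.2.2.2 v]⟩⟩)
  invFun y := ⟨y.1.1, y.2.1, (y.1.2.1, y.2.2.1), fun v =>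
      ⟨(y.1.2.2 v).1, (y.2.2.2 v).1, by rw [(y.1.2.2 v).2, (y.2.2.2 v).2]⟩,
    fun v => (y.1.2.2 v).2⟩
  left_inv _ := rfl
  right_inv _ := rfl

theorem card_exactPairsOnto (hS : IsSubrep W S) :
    Nat.card (ExactPairsOnto S) =
      glcard Q K (dimVec S) * glcard Q K (fun v => W.d v - dimVec S v) := by
  rw [Nat.card_congr exactPairsEquiv, Nat.card_prod,
    Nat.card_eq_of_bijective _ (bijective_restrict_embeddingsOnto hS),
    Nat.card_eq_of_bijective _ (bijective_restrict_quotientsBy hS), Nat.card_pi, Nat.card_pi,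
    glcard, glcard]
  congr 1 <;> refine Finset.prod_congr rfl fun v _ => ?_
  · exact card_injective_range_eq (S v) rfl
  · exact card_surjective_ker_eq (S v) (finrank_quotient_eq S v)

theorem exists_isExactPair_range_eq (hS : IsSubrep W S) :
    ∃ (L N : Rep Q K) (ι : Hom L W) (π : Hom W N),
      IsExactPair ι π ∧ ∀ v, range (ι.f v) = S v := by
  obtain ⟨x, -⟩ := (bijective_restrict_embeddingsOnto hS).2 fun v =>
    (injectiveRangeEquiv (S v)).symm (LinearEquiv.ofFinrankEq _ _ (finrank_fin_fun K))
  obtain ⟨y, -⟩ := (bijective_restrict_quotientsBy hS).2 fun v =>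
    (surjectiveKerEquiv (S v)).symm
      (LinearEquiv.ofFinrankEq _ _ (by simp [finrank_quotient_eq]))
  obtain ⟨mV, mU, p, hp⟩ := exactPairsEquiv.symm (x, y)
  exact ⟨_, _, p.1, p.2, hp⟩

end Subrep

instance [Finite K] (M N : Rep Q K) : Finite (Hom M N) :=
  Finite.of_injective (fun φ : Hom M N => fun v => ⇑(φ.f v))
    fun _ _ h => Hom.ext fun v => DFunLike.coe_injective (congrFun h v)

instance [Finite K] (d : Q.V → ℕ) : Finite (RepOf Q K d) :=
  Finite.of_injective (fun m : RepOf Q K d => fun e => ⇑(m e))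
    fun _ _ h => funext fun e => DFunLike.coe_injective (congrFun h e)

theorem glcard_pos [Finite K] (d : Q.V → ℕ) : 0 < glcard Q K d :=
  Finset.prod_pos fun v _ =>
    have : Finite ((Fin (d v) → K) ≃ₗ[K] (Fin (d v) → K)) :=
      Finite.of_injective _ DFunLike.coe_injective
    have : Nonempty ((Fin (d v) → K) ≃ₗ[K] (Fin (d v) → K)) := ⟨LinearEquiv.refl K _⟩
    Nat.card_pos

theorem card_exactPairs_range_eq_zero {L W N : Rep Q K} {S : ∀ v, Submodule K (Fin (W.d v) → K)}
    (hL : L.d ≠ dimVec S) :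
    Nat.card {p : Hom L W × Hom W N // IsExactPair p.1 p.2 ∧ ∀ v, range (p.1.f v) = S v} = 0 :=
  have : IsEmpty {p : Hom L W × Hom W N // IsExactPair p.1 p.2 ∧ ∀ v, range (p.1.f v) = S v} :=
    ⟨fun p => hL <| funext fun v => by
      rw [dimVec, ← p.2.2 v, finrank_range_of_inj (p.2.1 v).1, finrank_fin_fun]⟩
  Nat.card_of_isEmpty

theorem repIso_of_range_eq {L₁ L₂ W : Rep Q K} (ι₁ : Hom L₁ W) (ι₂ : Hom L₂ W)
    (h₁ : ∀ v, Injective (ι₁.f v)) (h₂ : ∀ v, Injective (ι₂.f v))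
    (h : ∀ v, range (ι₁.f v) = range (ι₂.f v)) : repIso L₁ L₂ := by
  let φ v := (injectiveRangeEquiv _ ⟨ι₁.f v, h₁ v, h v⟩).trans
    (injectiveRangeEquiv _ ⟨ι₂.f v, h₂ v, rfl⟩).symm
  have hφ v x : ι₂.f v (φ v x) = ι₁.f v x :=
    calc ι₂.f v (φ v x) = injectiveRangeEquiv _ ⟨ι₂.f v, h₂ v, rfl⟩ (φ v x) := rfl
      _ = ι₁.f v x := by simp [φ]
  refine ⟨⟨fun v => φ v, fun e => LinearMap.ext fun x => h₂ _ ?_⟩,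
    fun v => (φ v).bijective⟩
  simp only [LinearMap.comp_apply, LinearEquiv.coe_coe, hφ, ι₁.comm_apply, ι₂.comm_apply]

theorem repIso_of_ker_eq {W N₁ N₂ : Rep Q K} (π₁ : Hom W N₁) (π₂ : Hom W N₂)
    (h₁ : ∀ v, Surjective (π₁.f v)) (h₂ : ∀ v, Surjective (π₂.f v))
    (h : ∀ v, ker (π₁.f v) = ker (π₂.f v)) : repIso N₁ N₂ := by
  let φ v := (surjectiveKerEquiv _ ⟨π₁.f v, h₁ v, h v⟩).symm.trans
    (surjectiveKerEquiv _ ⟨π₂.f v, h₂ v, rfl⟩)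
  have hφ v x : φ v (π₁.f v x) = π₂.f v x := by
    have : (surjectiveKerEquiv _ ⟨π₁.f v, h₁ v, h v⟩).symm (π₁.f v x) =
        Submodule.Quotient.mk x := by
      rw [LinearEquiv.symm_apply_eq, surjectiveKerEquiv_apply_mk]
    simp [φ, this]
  refine ⟨⟨fun v => φ v, fun e => LinearMap.ext fun y => ?_⟩, fun v => (φ v).bijective⟩
  obtain ⟨x, rfl⟩ := h₁ _ y
  simp only [LinearMap.comp_apply, LinearEquiv.coe_coe, ← π₁.comm_apply, hφ, π₂.comm_apply]

structure IsTorsionPart (T F : Rep Q K → Prop)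
    (t : ∀ W : Rep Q K, ∀ v, Submodule K (Fin (W.d v) → K)) : Prop where
  isSubrep (W : Rep Q K) : IsSubrep W (t W)
  exact_iff {L W N : Rep Q K} {ι : Hom L W} {π : Hom W N} :
    IsExactPair ι π → (T L ∧ F N ↔ ∀ v, range (ι.f v) = t W v)

namespace IsTorsionPart

variable {T F : Rep Q K → Prop} {t : ∀ W : Rep Q K, ∀ v, Submodule K (Fin (W.d v) → K)}

theorem isTorsionPair (h : IsTorsionPart T F t) (hT : ∀ M N, repIso M N → (T M ↔ T N))
    (hF : ∀ M N, repIso M N → (F M ↔ F N))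
    (hTF : ∀ (M N : Rep Q K) (φ : Hom M N), T M → F N → ∀ v, φ.f v = 0) :
    IsTorsionPair T F := by
  refine ⟨hT, hF, hTF, fun W => ?_, ?_⟩
  · obtain ⟨L, N, ι, π, hex, hr⟩ := exists_isExactPair_range_eq (h.isSubrep W)
    obtain ⟨hL, hN⟩ := (h.exact_iff hex).2 hr
    exact ⟨L, N, ι, π, hL, hN, hex⟩
  · intro W L₁ N₁ L₂ N₂ ι₁ π₁ ι₂ π₂ hT₁ hF₁ hex₁ hT₂ hF₂ hex₂
    have hr₁ := (h.exact_iff hex₁).1 ⟨hT₁, hF₁⟩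
    have hr₂ := (h.exact_iff hex₂).1 ⟨hT₂, hF₂⟩
    refine ⟨repIso_of_range_eq ι₁ ι₂ (fun v => (hex₁ v).1) (fun v => (hex₂ v).1)
        fun v => (hr₁ v).trans (hr₂ v).symm,
      repIso_of_ker_eq π₁ π₂ (fun v => (hex₁ v).2.1) (fun v => (hex₂ v).2.1)
        fun v => ?_⟩
    rw [← (hex₁ v).2.2, ← (hex₂ v).2.2, hr₁, hr₂]

theorem chi_mul_chi_mul_epairs (h : IsTorsionPart T F t) {L W N : Rep Q K} :
    chi F N * chi T L * (epairs N L W : ℚ) =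
      Nat.card
        {p : Hom L W × Hom W N // IsExactPair p.1 p.2 ∧ ∀ v, range (p.1.f v) = t W v} := by
  by_cases hTF : T L ∧ F N
  · rw [chi, chi, if_pos hTF.2, if_pos hTF.1, one_mul, one_mul, epairs]
    exact congrArg Nat.cast <| Nat.card_congr <| Equiv.subtypeEquivRight fun p =>
      ⟨fun hp => ⟨hp, (h.exact_iff hp).1 hTF⟩, fun hp => hp.1⟩
  · have : IsEmpty
        {p : Hom L W × Hom W N // IsExactPair p.1 p.2 ∧ ∀ v, range (p.1.f v) = t W v} :=
      ⟨fun p => hTF ((h.exact_iff p.2.1).2 p.2.2)⟩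
    rw [Nat.card_of_isEmpty, Nat.cast_zero]
    simp only [chi]
    split_ifs <;> simp_all

theorem hmul_chi [Fintype K] (h : IsTorsionPart T F t) :
    hmul (chi F) (chi T) = fun _ => 1 := by
  funext W
  have hterm (δ : Q.V → ℕ) (mV : RepOf Q K δ) (mU : RepOf Q K fun v => W.d v - δ v) :=
    h.chi_mul_chi_mul_epairs (L := mV.toRep) (W := W) (N := mU.toRep)
  have hzero (δ : Q.V → ℕ) (hδ : δ ≠ dimVec (t W)) (mV : RepOf Q K δ)
      (mU : RepOf Q K fun v => W.d v - δ v) :=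
    card_exactPairs_range_eq_zero (L := mV.toRep) (N := mU.toRep) hδ
  simp only [hmul, hterm]
  rw [finsum_eq_single _ (dimVec (t W)) fun δ hδ => by simp [hzero δ hδ],
    finsum_eq_if, if_pos (dimVec_le _)]
  have := Fintype.ofFinite (RepOf Q K (dimVec (t W)))
  have := Fintype.ofFinite (RepOf Q K fun v => W.d v - dimVec (t W) v)
  have hG : (0 : ℚ) <
      glcard Q K (dimVec (t W)) * glcard Q K (fun v => W.d v - dimVec (t W) v) := by
    exact_mod_cast mul_pos (glcard_pos _) (glcard_pos _)
  simp only [finsum_eq_sum_of_fintype, ← Finset.sum_div]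
  rw [div_eq_one_iff_eq hG.ne', ← Nat.cast_mul, ← card_exactPairsOnto (h.isSubrep W),
    Nat.card_sigma]
  simp [Nat.card_sigma]

end IsTorsionPart

section Simple

variable {k : Q.V}

theorem simpleAt_d_self : (simpleAt Q K k).d k = 1 := if_pos rfl

theorem simpleAt_d_of_ne {v : Q.V} (h : v ≠ k) : (simpleAt Q K k).d v = 0 := if_neg h

theorem funLeft_cast_self {n : ℕ} (h : n = n) (x : Fin n → K) :
    funLeft K K (Fin.cast h) x = x :=
  rfl

-- `funLeft K K (Fin.cast _)` transports a vector along an equation between vertices.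
def outKer (W : Rep Q K) (v : Q.V) : Submodule K (Fin (W.d v) → K) :=
  ⨅ (e : Q.E) (h : Q.src e = v), ker (W.m e ∘ₗ funLeft K K (Fin.cast (congrArg W.d h)))

def inSpan (W : Rep Q K) (v : Q.V) : Submodule K (Fin (W.d v) → K) :=
  ⨆ (e : Q.E) (h : Q.tgt e = v), range (funLeft K K (Fin.cast (congrArg W.d h).symm) ∘ₗ W.m e)

theorem mem_outKer_iff {W : Rep Q K} {v : Q.V} {x : Fin (W.d v) → K} :
    x ∈ outKer W v ↔
      ∀ e (h : Q.src e = v), W.m e (funLeft K K (Fin.cast (congrArg W.d h)) x) = 0 := by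
  simp [outKer]

theorem apply_eq_zero_of_mem_outKer {W : Rep Q K} {e : Q.E} {x : Fin (W.d (Q.src e)) → K}
    (hx : x ∈ outKer W (Q.src e)) : W.m e x = 0 :=
  mem_outKer_iff.1 hx e rfl

theorem apply_mem_inSpan (W : Rep Q K) (e : Q.E) (x : Fin (W.d (Q.src e)) → K) :
    W.m e x ∈ inSpan W (Q.tgt e) :=
  Submodule.mem_iSup_of_mem e (Submodule.mem_iSup_of_mem rfl ⟨x, rfl⟩)

theorem outKer_eq_top {W : Rep Q K} {v : Q.V} (h : ∀ e, Q.src e = v → W.d (Q.tgt e) = 0) :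
    outKer W v = ⊤ :=
  eq_top_iff.2 fun _ _ => mem_outKer_iff.2 fun e he => (subsingleton_fin_fun (h e he)).elim _ _

theorem inSpan_eq_bot {W : Rep Q K} {v : Q.V} (h : ∀ e, Q.tgt e = v → W.d (Q.src e) = 0) :
    inSpan W v = ⊥ :=
  iSup₂_eq_bot.2 fun e he =>
    have := subsingleton_fin_fun (α := K) (h e he)
    range_eq_bot.2 (LinearMap.ext fun x => by simp [Subsingleton.elim x 0])

theorem mem_outKer_of_apply_mem {W N : Rep Q K} (π : Hom W N) {v : Q.V}
    (hπ : ∀ e, Q.src e = v → Injective (π.f (Q.tgt e))) {x : Fin (W.d v) → K}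
    (hx : π.f v x ∈ outKer N v) : x ∈ outKer W v := by
  refine mem_outKer_iff.2 fun e he => ?_
  subst he
  apply hπ e rfl
  rw [map_zero, funLeft_cast_self, π.comm_apply, apply_eq_zero_of_mem_outKer hx]

theorem inSpan_le_map {L W : Rep Q K} (ι : Hom L W) {v : Q.V}
    (hι : ∀ e, Q.tgt e = v → Surjective (ι.f (Q.src e))) :
    inSpan W v ≤ (inSpan L v).map (ι.f v) := by
  refine iSup₂_le fun e he => ?_
  subst he
  rintro _ ⟨x, rfl⟩
  obtain ⟨y, rfl⟩ := hι e rfl x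
  exact ⟨L.m e y, apply_mem_inSpan L e y, ι.comm_apply e y⟩

noncomputable def Hom.ofMemOutKer (W : Rep Q K) (x : Fin (W.d k) → K) (hx : x ∈ outKer W k) :
    Hom (simpleAt Q K k) W where
  f v := if h : v = k then
      (proj (⟨0, by rw [h, simpleAt_d_self]; exact one_pos⟩ :
        Fin ((simpleAt Q K k).d v))).smulRight (funLeft K K (Fin.cast (congrArg W.d h)) x)
    else 0
  comm e := LinearMap.ext fun s => by
    rw [LinearMap.comp_apply, LinearMap.comp_apply, show (simpleAt Q K k).m e s = 0 from rfl,
      map_zero]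
    split_ifs with h
    · simp [mem_outKer_iff.1 hx e h]
    · simp

noncomputable def Hom.toSimpleOfInSpanLe (W : Rep Q K) (β : (Fin (W.d k) → K) →ₗ[K] K)
    (hβ : inSpan W k ≤ ker β) : Hom W (simpleAt Q K k) where
  f v := if h : v = k then pi fun _ => β ∘ₗ funLeft K K (Fin.cast (congrArg W.d h).symm) else 0
  comm e := LinearMap.ext fun x => by
    rw [LinearMap.comp_apply, LinearMap.comp_apply, show (simpleAt Q K k).m e = 0 from rfl,
      LinearMap.zero_apply]
    split_ifs with h
    · funext i
      exact hβ (Submodule.mem_iSup_of_mem e (Submodule.mem_iSup_of_mem h ⟨x, rfl⟩))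
    · rfl

theorem trace_simpleAt_self (W : Rep Q K) : trace (simpleAt Q K k) W k = outKer W k := by
  refine le_antisymm (iSup_le fun φ => ?_) fun x hx => ?_
  · rintro _ ⟨s, rfl⟩
    refine mem_outKer_iff.2 fun e he => ?_
    subst he
    rw [funLeft_cast_self, ← φ.comm_apply, show (simpleAt Q K _).m e s = 0 from rfl, map_zero]
  · refine Submodule.mem_iSup_of_mem (Hom.ofMemOutKer W x hx) ⟨fun _ => 1, ?_⟩
    simp [Hom.ofMemOutKer]

theorem reject_simpleAt_self (W : Rep Q K) : reject W (simpleAt Q K k) k = inSpan W k := by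
  refine le_antisymm (fun x hx => ?_) (iSup₂_le fun e he => ?_)
  · by_contra hx'
    obtain ⟨β, hβx, hβ⟩ := Submodule.exists_le_ker_of_notMem hx'
    have h0 := congrFun (mem_ker.1 ((Submodule.mem_iInf _).1 hx (Hom.toSimpleOfInSpanLe W β hβ)))
      ⟨0, by rw [simpleAt_d_self]; exact one_pos⟩
    exact hβx (by simpa [Hom.toSimpleOfInSpanLe, funLeft_cast_self] using h0)
  · subst he
    rintro _ ⟨x, rfl⟩
    refine (Submodule.mem_iInf _).2 fun φ => ?_
    rw [mem_ker, LinearMap.comp_apply, funLeft_cast_self, φ.comm_apply]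
    rfl

end Simple

def Supported (k : Q.V) (M : Rep Q K) : Prop := ∀ v, v ≠ k → M.d v = 0

theorem repIso.supported_iff {k : Q.V} {M N : Rep Q K} (h : repIso M N) :
    Supported k M ↔ Supported k N := by
  simp only [Supported, h.d_eq]

section NoLoop

variable {k : Q.V}

theorem trace_simpleAt_eq_top_of_supported (hloop : ∀ e : Q.E, Q.src e = k → Q.tgt e ≠ k)
    {M : Rep Q K} (hM : Supported k M) (v : Q.V) : trace (simpleAt Q K k) M v = ⊤ := by
  by_cases hv : v = k
  · subst hv
    rw [trace_simpleAt_self]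
    exact outKer_eq_top fun e he => hM _ (hloop e he)
  · have := subsingleton_fin_fun (α := K) (hM v hv)
    exact Subsingleton.elim _ _

theorem reject_simpleAt_eq_bot_of_supported (hloop : ∀ e : Q.E, Q.src e = k → Q.tgt e ≠ k)
    {N : Rep Q K} (hN : Supported k N) (v : Q.V) : reject N (simpleAt Q K k) v = ⊥ := by
  by_cases hv : v = k
  · subst hv
    rw [reject_simpleAt_self]
    exact inSpan_eq_bot fun e he => hN _ fun hs => hloop e hs he
  · have := subsingleton_fin_fun (α := K) (hN v hv)
    exact Subsingleton.elim _ _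

variable {L W N : Rep Q K} {ι : Hom L W} {π : Hom W N}

theorem range_eq_trace_of_isExactPair (hloop : ∀ e : Q.E, Q.src e = k → Q.tgt e ≠ k)
    (hex : IsExactPair ι π) (hL : Supported k L) (hN : HomVanishes (simpleAt Q K k) N)
    (v : Q.V) : range (ι.f v) = trace (simpleAt Q K k) W v := by
  refine le_antisymm ?_ ?_
  · rw [← Submodule.map_top, ← trace_simpleAt_eq_top_of_supported hloop hL v]
    exact map_trace_le _ ι v
  · rw [(hex v).2.2, le_ker_iff_map, ← le_bot_iff, ← (trace_eq_bot_iff _).2 hN v]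
    exact map_trace_le _ π v

theorem supported_of_range_eq_trace (hι : ∀ v, Injective (ι.f v))
    (hr : ∀ v, range (ι.f v) = trace (simpleAt Q K k) W v) : Supported k L := fun v hv => by
  have := finrank_range_of_inj (hι v)
  rwa [hr, trace_eq_bot_of_d_eq_zero _ _ (simpleAt_d_of_ne hv), finrank_bot, finrank_fin_fun,
    eq_comm] at this

theorem homVanishes_of_range_eq_trace (hloop : ∀ e : Q.E, Q.src e = k → Q.tgt e ≠ k)
    (hex : IsExactPair ι π) (hr : ∀ v, range (ι.f v) = trace (simpleAt Q K k) W v) :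
    HomVanishes (simpleAt Q K k) N := by
  refine (trace_eq_bot_iff _).1 fun v => ?_
  by_cases hv : v = k
  · subst hv
    refine (trace_simpleAt_self N).trans (eq_bot_iff.2 fun y hy => ?_)
    obtain ⟨x, rfl⟩ := (hex v).2.1 y
    -- `π` is injective at the target of every arrow out of `k`, so the lift `x` of `y` is still
    -- killed by those arrows.
    have hx : x ∈ outKer W v := mem_outKer_of_apply_mem π (fun e he => by
      rw [← ker_eq_bot, ← (hex _).2.2, hr,
        trace_eq_bot_of_d_eq_zero _ _ (simpleAt_d_of_ne (hloop e he))]) hy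
    rw [← trace_simpleAt_self, ← hr, (hex v).2.2] at hx
    exact (Submodule.mem_bot K).2 hx
  · exact trace_eq_bot_of_d_eq_zero _ _ (simpleAt_d_of_ne hv)

theorem range_eq_reject_of_isExactPair (hloop : ∀ e : Q.E, Q.src e = k → Q.tgt e ≠ k)
    (hex : IsExactPair ι π) (hL : HomVanishes L (simpleAt Q K k)) (hN : Supported k N)
    (v : Q.V) : range (ι.f v) = reject W (simpleAt Q K k) v := by
  refine le_antisymm ?_ ?_
  · rw [← Submodule.map_top, ← (reject_eq_top_iff _).2 hL v]
    exact map_reject_le _ ι v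
  · rw [(hex v).2.2, le_ker_iff_map, ← le_bot_iff,
      ← reject_simpleAt_eq_bot_of_supported hloop hN v]
    exact map_reject_le _ π v

theorem supported_of_range_eq_reject (hex : IsExactPair ι π)
    (hr : ∀ v, range (ι.f v) = reject W (simpleAt Q K k) v) : Supported k N := fun v hv => by
  have hker : ker (π.f v) = ⊤ := by
    rw [← (hex v).2.2, hr, reject_eq_top_of_d_eq_zero _ _ (simpleAt_d_of_ne hv)]
  have := (π.f v).finrank_range_add_finrank_ker
  rw [range_eq_top.2 (hex v).2.1, hker, finrank_top, finrank_top, finrank_fin_fun,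
    finrank_fin_fun] at this
  omega

theorem homVanishes_of_range_eq_reject (hloop : ∀ e : Q.E, Q.src e = k → Q.tgt e ≠ k)
    (hex : IsExactPair ι π) (hr : ∀ v, range (ι.f v) = reject W (simpleAt Q K k) v) :
    HomVanishes L (simpleAt Q K k) := by
  refine (reject_eq_top_iff _).1 fun v => ?_
  by_cases hv : v = k
  · subst hv
    -- `ι` is onto at the source of every arrow into `k`, so the incoming images in `W` at `k`
    -- come from those in `L`.
    rw [reject_simpleAt_self, eq_top_iff, ← Submodule.map_le_map_iff_of_injective (hex v).1,
      Submodule.map_top, hr, reject_simpleAt_self]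
    exact inSpan_le_map ι fun e he => range_eq_top.1 <| by
      rw [hr, reject_eq_top_of_d_eq_zero _ _ (simpleAt_d_of_ne fun hs => hloop e hs he)]
  · exact reject_eq_top_of_d_eq_zero _ _ (simpleAt_d_of_ne hv)

theorem isTorsionPart_trace (hloop : ∀ e : Q.E, Q.src e = k → Q.tgt e ≠ k) :
    IsTorsionPart (Supported k) (HomVanishes (simpleAt Q K k)) (trace (simpleAt Q K k)) where
  isSubrep := trace_isSubrep _
  exact_iff hex := ⟨fun ⟨hL, hN⟩ => range_eq_trace_of_isExactPair hloop hex hL hN, fun hr =>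
    ⟨supported_of_range_eq_trace (fun v => (hex v).1) hr,
      homVanishes_of_range_eq_trace hloop hex hr⟩⟩

theorem isTorsionPart_reject (hloop : ∀ e : Q.E, Q.src e = k → Q.tgt e ≠ k) :
    IsTorsionPart (HomVanishes · (simpleAt Q K k)) (Supported k) (reject · (simpleAt Q K k)) where
  isSubrep W := reject_isSubrep _ W
  exact_iff hex := ⟨fun ⟨hL, hN⟩ => range_eq_reject_of_isExactPair hloop hex hL hN, fun hr =>
    ⟨homVanishes_of_range_eq_reject hloop hex hr, supported_of_range_eq_reject hex hr⟩⟩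

end NoLoop

/-- Let `k` be a vertex of `Q` with no loops at `k`.
Let `mod(Q)_k = {M : Hom(S_k, M) = 0}`, `mod(Q)^k = {M : Hom(M, S_k) = 0}` and let
`⟨S_k⟩` be the subcategory of modules all of whose composition factors are `S_k`
(i.e. modules supported at the vertex `k`).  Then `(⟨S_k⟩, mod(Q)_k)` and
`(mod(Q)^k, ⟨S_k⟩)` are torsion pairs, and in the completed Hall algebra
`χ(mod(Q)_k)·χ(⟨S_k⟩) = χ = χ(⟨S_k⟩)·χ(mod(Q)^k)`. -/
theorem stmt18 (Q : FQuiver) (K : Type) [Field K] [Fintype K] (k : Q.V)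
    (hloop : ∀ e : Q.E, Q.src e = k → Q.tgt e ≠ k) :
    IsTorsionPair (fun M : Rep Q K => ∀ v, v ≠ k → M.d v = 0)
      (fun M => ∀ φ : Hom (simpleAt Q K k) M, ∀ v, φ.f v = 0) ∧
    IsTorsionPair (fun M : Rep Q K => ∀ φ : Hom M (simpleAt Q K k), ∀ v, φ.f v = 0)
      (fun M => ∀ v, v ≠ k → M.d v = 0) ∧
    hmul (chi (fun M : Rep Q K => ∀ φ : Hom (simpleAt Q K k) M, ∀ v, φ.f v = 0))
        (chi (fun M : Rep Q K => ∀ v, v ≠ k → M.d v = 0)) = (fun _ => (1 : ℚ)) ∧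
    hmul (chi (fun M : Rep Q K => ∀ v, v ≠ k → M.d v = 0))
        (chi (fun M : Rep Q K => ∀ φ : Hom M (simpleAt Q K k), ∀ v, φ.f v = 0)) =
      (fun _ => (1 : ℚ)) := by
  have h₁ := isTorsionPart_trace (K := K) hloop
  have h₂ := isTorsionPart_reject (K := K) hloop
  refine ⟨h₁.isTorsionPair (fun _ _ h => h.supported_iff) (fun _ _ h => h.homVanishes_right_iff)
      fun _ _ φ hM hN => hN.of_trace_eq_top (trace_simpleAt_eq_top_of_supported hloop hM) φ,
    h₂.isTorsionPair (fun _ _ h => h.homVanishes_left_iff) (fun _ _ h => h.supported_iff)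
      fun _ _ φ hM hN => hM.of_reject_eq_bot (reject_simpleAt_eq_bot_of_supported hloop hN) φ,
    h₁.hmul_chi, h₂.hmul_chi⟩

end QP
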